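/- Let C be a Weyl chamber, let μ ∈ Λ be a translation with μ(A₀) ⊂ C, and let w ∈ W̃ with w(A₀) ⊂ C. Then l(μw) = l(μ) + l(w). -/

import Mathlib

open scoped Classical

noncomputable section

/-- A (reduced, crystallographic) root system `Φ` in the dual of a real vector space `V`,
together with a chosen coroot `α̌ ∈ V` for every root `α`. -/
structure RootSystemData (V : Type*) [AddCommGroup V] [Module ℝ V] where
  roots : Set (Module.Dual ℝ V)
  coroot : Module.Dual ℝ V → V
  finite : roots.Finite
  ne_zero : ∀ α ∈ roots, α ≠ 0
  root_coroot_two : ∀ α ∈ roots, α (coroot α) = 2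
  reflect_mem : ∀ α ∈ roots, ∀ β ∈ roots, β - β (coroot α) • α ∈ roots
  crystallographic : ∀ α ∈ roots, ∀ β ∈ roots, ∃ n : ℤ, β (coroot α) = (n : ℝ)
  reduced : ∀ α ∈ roots, ∀ c : ℝ, c • α ∈ roots → c = 1 ∨ c = -1
  span_top : Submodule.span ℝ roots = ⊤

section
variable {V : Type*} [AddCommGroup V] [Module ℝ V]

/-- The simple elements of a positive system `P`: elements which are not sums of two
elements of `P`. -/
def simplesOf (P : Set (Module.Dual ℝ V)) : Set (Module.Dual ℝ V) :=
  {α | α ∈ P ∧ ¬∃ β ∈ P, ∃ γ ∈ P, α = β + γ}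

/-- The affine root `(α, n)` viewed as the affine function `x ↦ α(x) + n`. -/
def aev (α : Module.Dual ℝ V) (n : ℤ) : V → ℝ := fun x => α x + (n : ℝ)

/-- `π : W̃ → Λ`, `w ↦ w(0)`. -/
def piL (w : Equiv.Perm V) : V := w 0

/-- Translation by `μ`, as an element of the group of permutations of `V`. -/
def transl (μ : V) : Equiv.Perm V := Equiv.addLeft μ

end

namespace RootSystemData

variable {V : Type*} [AddCommGroup V] [Module ℝ V]

variable (RS : RootSystemData V)

/-- A point is regular if it lies on no root hyperplane. -/
def IsRegularPt (x : V) : Prop := ∀ α ∈ RS.roots, α x ≠ 0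

/-- Weyl chambers of `Φ`: connected components of the set of regular points,
described by the strict sign pattern of a regular point. -/
def IsChamber (C : Set V) : Prop :=
  ∃ v, RS.IsRegularPt v ∧ C = {x | ∀ α ∈ RS.roots, 0 < α v → 0 < α x}

/-- The type `𝒞` of Weyl chambers. -/
abbrev ChamberT := {C : Set V // RS.IsChamber C}

/-- The set `Φ_C` of `C`-positive roots. -/
def pos (C : Set V) : Set (Module.Dual ℝ V) := {α | α ∈ RS.roots ∧ ∀ x ∈ C, 0 < α x}


/-- The set `Δ_C` of `C`-simple roots. -/
def simples (C : Set V) : Set (Module.Dual ℝ V) := simplesOf (RS.pos C)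

/-- The affine reflection `s_{(α,n)} : x ↦ x − (α(x)+n) • α̌`. -/
def sAff (α : Module.Dual ℝ V) (n : ℤ) : Equiv.Perm V :=
  if h : α (RS.coroot α) = 2 then
    Function.Involutive.toPerm (fun x => x - (α x + (n : ℝ)) • RS.coroot α) (by
      intro x
      simp only [map_sub, map_smul, smul_eq_mul, h]
      match_scalars <;> ring)
  else Equiv.refl V


/-- Positivity of an affine function `f` (which is required to be an affine root
`(α,n)`), relative to a positive system `P ⊂ Φ`:  `n > 0`, or `n = 0 ∧ α ∈ P`. -/
def IsPosAff (P : Set (Module.Dual ℝ V)) (f : V → ℝ) : Prop :=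
  ∃ α ∈ RS.roots, ∃ n : ℤ, f = aev α n ∧ (0 < n ∨ (n = 0 ∧ α ∈ P))

/-- The subgroup of the affine Weyl group generated by the reflections `s_{(α,n)}`
with `α ∈ Φ ∩ Φ'`. -/
def affWeylOf (Φ' : Set (Module.Dual ℝ V)) : Subgroup (Equiv.Perm V) :=
  Subgroup.closure {g | ∃ α ∈ RS.roots ∩ Φ', ∃ n : ℤ, g = RS.sAff α n}

/-- The affine Weyl group `W̃ = W ⋉ Λ`, realized as the group generated by all affine
reflections `s_{(α,n)}`. -/
def affWeyl : Subgroup (Equiv.Perm V) := RS.affWeylOf Set.univ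

/-- The finite Weyl group `W`, generated by the linear reflections `s_α = s_{(α,0)}`. -/
def weyl : Subgroup (Equiv.Perm V) :=
  Subgroup.closure {g | ∃ α ∈ RS.roots, g = RS.sAff α 0}

/-- The subgroup `W̃_α` generated by the reflections `s_{(α,n)}`, `n ∈ ℤ`. -/
def reflSubgroup (α : Module.Dual ℝ V) : Subgroup (Equiv.Perm V) :=
  Subgroup.closure {g | ∃ n : ℤ, g = RS.sAff α n}


/-- The coroot lattice `Λ ⊂ V`. -/
def corootLattice : AddSubgroup V := AddSubgroup.closure (RS.coroot '' RS.roots)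


/-- The (open) fundamental alcove `A₀ ⊂ C₀`, whose closure contains `0`. -/
def alcove (C₀ : Set V) : Set V := {x | ∀ α ∈ RS.pos C₀, 0 < α x ∧ α x < 1}

/-- `w ∈ C`, i.e. `w(A₀) ⊂ C`. -/
def MemC (C₀ : Set V) (w : Equiv.Perm V) (C : Set V) : Prop :=
  ∀ x ∈ RS.alcove C₀, w x ∈ C

/-- The inversion set of `w`: positive affine roots `f` with `w⁻¹(f) = f ∘ w`
negative. -/
def invSet (P : Set (Module.Dual ℝ V)) (w : Equiv.Perm V) : Set (V → ℝ) :=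
  {f | RS.IsPosAff P f ∧ ¬ RS.IsPosAff P (fun x => f (w x))}

/-- The length function `l` on `W̃` determined by the fundamental alcove:
the number of inversions. -/
def len (C₀ : Set V) (w : Equiv.Perm V) : ℕ := (RS.invSet (RS.pos C₀) w).ncard

/-- The (strict) Bruhat order on `W̃`: the transitive closure of
`x < s_{(α,n)} x` whenever the length increases. -/
def bruhatLT (C₀ : Set V) : Equiv.Perm V → Equiv.Perm V → Prop :=
  Relation.TransGen (fun x y =>
    (∃ α ∈ RS.roots, ∃ n : ℤ, y = RS.sAff α n * x) ∧ RS.len C₀ x < RS.len C₀ y)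

/-- The Bruhat order `≤` on `W̃`. -/
def bruhatLE (C₀ : Set V) (x y : Equiv.Perm V) : Prop := x = y ∨ RS.bruhatLT C₀ x y

/-- One step of the ordering `<_{Φ'}`:  `x = s_{(α,n)} y <_{(α,n)} y` with `α ∈ Φ'`,
i.e. `y⁻¹((α,n)) > 0` (positivity of affine roots relative to `P`). -/
def stepRel (P Φ' : Set (Module.Dual ℝ V)) (x y : Equiv.Perm V) : Prop :=
  ∃ α ∈ RS.roots ∩ Φ', ∃ n : ℤ,
    x = RS.sAff α n * y ∧ RS.IsPosAff P (fun v => aev α n (y v))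

/-- The ordering `<_{Φ'}` on `W̃` (with affine-root positivity relative to `P`). -/
def ordLT (P Φ' : Set (Module.Dual ℝ V)) : Equiv.Perm V → Equiv.Perm V → Prop :=
  Relation.TransGen (RS.stepRel P Φ')

/-- The ordering `≤_{Φ'}` on `W̃`. -/
def ordLE (P Φ' : Set (Module.Dual ℝ V)) (x y : Equiv.Perm V) : Prop :=
  x = y ∨ RS.ordLT P Φ' x y

/-- The ordering `<_{Φ'}` on `V`: `x <_{Φ'} y` iff `y − x` is a positive linear
combination of coroots `α̌` with `α ∈ Φ'`. -/
def vecLT (Φ' : Set (Module.Dual ℝ V)) (x y : V) : Prop :=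
  ∃ s : Finset (Module.Dual ℝ V), ∃ c : Module.Dual ℝ V → ℝ,
    s.Nonempty ∧ (∀ α ∈ s, α ∈ RS.roots ∩ Φ' ∧ 0 < c α) ∧
      y - x = ∑ α ∈ s, c α • RS.coroot α

/-- The ordering `≤_{Φ'}` on `V`. -/
def vecLE (Φ' : Set (Module.Dual ℝ V)) (x y : V) : Prop := x = y ∨ RS.vecLT Φ' x y

/-- `ψ` is the fundamental weight of the chamber `C` corresponding to the simple root
`α ∈ Δ_C`:  `⟨ψ, β̌⟩ = δ_{αβ}` for `β ∈ Δ_C`. -/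
def PairsIn (C : Set V) (ψ α : Module.Dual ℝ V) : Prop :=
  α ∈ RS.simples C ∧ ∀ β ∈ RS.simples C, ψ (RS.coroot β) = if β = α then 1 else 0

/-- `ψv` is the fundamental coweight of the chamber `C` corresponding to the simple
root `α ∈ Δ_C`:  `⟨β, ψv⟩ = δ_{αβ}` for `β ∈ Δ_C`. -/
def CoPairsIn (C : Set V) (α : Module.Dual ℝ V) (ψv : V) : Prop :=
  α ∈ RS.simples C ∧ ∀ β ∈ RS.simples C, β ψv = if β = α then 1 else 0

/-- `ψ ∈ Ψ_C` with corresponding fundamental coweight `ψ̌ = ψv`. -/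
def IsFundPair (C : Set V) (ψ : Module.Dual ℝ V) (ψv : V) : Prop :=
  ∃ α, RS.PairsIn C ψ α ∧ RS.CoPairsIn C α ψv

/-- `ψ ∈ Ψ_C`. -/
def IsFundWeightOf (C : Set V) (ψ : Module.Dual ℝ V) : Prop := ∃ α, RS.PairsIn C ψ α

/-- `Φ(ψ) = {α ∈ Φ : ⟨α, ψ̌⟩ ≥ 0}` (described via the coweight `ψv = ψ̌`). -/
def phiNonneg (ψv : V) : Set (Module.Dual ℝ V) := {α | α ∈ RS.roots ∧ 0 ≤ α ψv}

/-- `Φ^ψ = {α ∈ Φ : ⟨α, ψ̌⟩ = 0}` (described via the coweight `ψv = ψ̌`). -/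
def phiZero (ψv : V) : Set (Module.Dual ℝ V) := {α | α ∈ RS.roots ∧ α ψv = 0}

/-- The set `W̃_ψ` of `w ∈ W̃` with `w⁻¹(Φ̃^ψ_{>0}) ⊂ Φ̃_{>0}`; here `Φψ = Φ^ψ`,
`P` is the chosen positive system of `Φ^ψ` and `C₀` determines `Φ̃_{>0}`. -/
def WpsiSet (C₀ : Set V) (Φψ P : Set (Module.Dual ℝ V)) : Set (Equiv.Perm V) :=
  {w | ∀ α ∈ RS.roots ∩ Φψ, ∀ n : ℤ, (0 < n ∨ (n = 0 ∧ α ∈ P)) →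
      RS.IsPosAff (RS.pos C₀) (fun v => aev α n (w v))}

/-- Admissibility of a tuple `w̄ ∈ W̃^𝒞`: `w_{s_α(C)} ≤_α w_C` for all `C ∈ 𝒞`,
`α ∈ Δ_C`. -/
def AdmissibleW (C₀ : Set V) (w : RS.ChamberT → Equiv.Perm V) : Prop :=
  ∀ C : RS.ChamberT, ∀ α ∈ RS.simples C.1, ∀ C' : RS.ChamberT,
    C'.1 = ⇑(RS.sAff α 0) '' C.1 → RS.ordLE (RS.pos C₀) {α} (w C') (w C)

/-- Quasi-admissibility of a tuple `w̄ ∈ W̃^𝒞`: `w_{s_α(C)} ∈ W̃_α w_C`. -/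
def QuasiAdmissibleW (w : RS.ChamberT → Equiv.Perm V) : Prop :=
  ∀ C : RS.ChamberT, ∀ α ∈ RS.simples C.1, ∀ C' : RS.ChamberT,
    C'.1 = ⇑(RS.sAff α 0) '' C.1 → ∃ u ∈ RS.reflSubgroup α, w C' = u * w C

/-- Admissibility of a tuple `μ̄ ∈ V^𝒞`: `μ_C − μ_{s_α(C)} ∈ ℝ_{≥0} α̌`. -/
def AdmissibleV (μ : RS.ChamberT → V) : Prop :=
  ∀ C : RS.ChamberT, ∀ α ∈ RS.simples C.1, ∀ C' : RS.ChamberT,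
    C'.1 = ⇑(RS.sAff α 0) '' C.1 → ∃ c : ℝ, 0 ≤ c ∧ μ C - μ C' = c • RS.coroot α

/-- Quasi-admissibility of a tuple `μ̄ ∈ V^𝒞`: `μ_C − μ_{s_α(C)} ∈ ℝ α̌`. -/
def QuasiAdmissibleV (μ : RS.ChamberT → V) : Prop :=
  ∀ C : RS.ChamberT, ∀ α ∈ RS.simples C.1, ∀ C' : RS.ChamberT,
    C'.1 = ⇑(RS.sAff α 0) '' C.1 → ∃ c : ℝ, μ C - μ C' = c • RS.coroot α

/-- `m`-regularity of a tuple `μ̄ ∈ V^𝒞`: `⟨α, μ_C⟩ ≥ m` for every `C ∈ 𝒞` and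
`α ∈ Φ_C`. -/
def RegularVAt (m : ℝ) (μ : RS.ChamberT → V) : Prop :=
  ∀ C : RS.ChamberT, ∀ α ∈ RS.pos C.1, m ≤ α (μ C)

/-- `m`-regularity of a tuple `w̄ ∈ W̃^𝒞`. -/
def RegularWAt (m : ℝ) (w : RS.ChamberT → Equiv.Perm V) : Prop :=
  RS.RegularVAt m (fun C => piL (w C))

/-- Regularity of a tuple `μ̄ ∈ V^𝒞`. -/
def RegularV (μ : RS.ChamberT → V) : Prop := ∃ m : ℝ, 0 < m ∧ RS.RegularVAt m μ

/-- Regularity of a tuple `w̄ ∈ W̃^𝒞`. -/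
def RegularW (w : RS.ChamberT → Equiv.Perm V) : Prop := ∃ m : ℝ, 0 < m ∧ RS.RegularWAt m w

/-- `e` is the quasi-admissible tuple `ē_ψ` corresponding to the standard basis vector
`e_ψ ∈ ℤ^Ψ`:  `(ē_ψ)_C = α̌` if `α ∈ Δ_C` corresponds to `ψ ∈ Ψ_C`, and `= 0` if
`ψ ∉ Ψ_C`. -/
def IsEPsiTuple (ψ : Module.Dual ℝ V) (e : RS.ChamberT → V) : Prop :=
  ∀ C : RS.ChamberT,
    (∀ α, RS.PairsIn C.1 ψ α → e C = RS.coroot α) ∧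
      ((¬∃ α, RS.PairsIn C.1 ψ α) → e C = 0)

end RootSystemData

/-! Fix a point `a` of the fundamental alcove. An affine root is positive iff it is positive
at `a`, so the inversions of `w` are the affine roots whose hyperplanes separate `a` from `w a`.
Because `μ + a` and `w a` lie in the same Weyl chamber `C`, every hyperplane separating `a`
from `μ + a`, or `μ + a` from `μ + w a`, also separates `a` from `μ + w a`; conversely, as
`μ + a` lies on no affine root hyperplane, each hyperplane between `a` and `μ + w a` is of one
of these two kinds. The affine roots are invariant under translation by `Λ`, so the hyperplanes
between `μ + a` and `μ + w a` are counted by `l(w)`. -/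

lemma aev_add_apply {V : Type*} [AddCommGroup V] [Module ℝ V] {β : Module.Dual ℝ V} {μ : V}
    {k : ℤ} (hk : β μ = k) (m : ℤ) (x : V) : aev β m (μ + x) = aev β (m + k) x := by
  simp only [aev, map_add, hk, Int.cast_add]
  ring

namespace RootSystemData

variable {V : Type*} [AddCommGroup V] [Module ℝ V] (RS : RootSystemData V)

lemma neg_mem_roots {β : Module.Dual ℝ V} (hβ : β ∈ RS.roots) : -β ∈ RS.roots := by
  have h := RS.reflect_mem β hβ β hβ
  rwa [RS.root_coroot_two β hβ, two_smul, sub_add_cancel_left] at h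

lemma sAff_apply {α : Module.Dual ℝ V} (hα : α ∈ RS.roots) (n : ℤ) (x : V) :
    RS.sAff α n x = x - (α x + n) • RS.coroot α := by
  rw [sAff, dif_pos (RS.root_coroot_two α hα)]
  rfl

lemma sAff_inv (α : Module.Dual ℝ V) (n : ℤ) : (RS.sAff α n)⁻¹ = RS.sAff α n := by
  by_cases h : α (RS.coroot α) = 2
  · rw [sAff, dif_pos h, Equiv.Perm.inv_def]
    rfl
  · rw [sAff, dif_neg h]
    rfl

lemma exists_int_eq_apply_of_mem_corootLattice {μ : V} (hμ : μ ∈ RS.corootLattice)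
    {β : Module.Dual ℝ V} (hβ : β ∈ RS.roots) : ∃ k : ℤ, β μ = k := by
  induction hμ using AddSubgroup.closure_induction with
  | mem x hx =>
    obtain ⟨α, hα, rfl⟩ := hx
    exact RS.crystallographic α hα β hβ
  | zero => exact ⟨0, by simp⟩
  | add x y _ _ hx hy =>
    obtain ⟨k, hk⟩ := hx
    obtain ⟨l, hl⟩ := hy
    exact ⟨k + l, by simp [hk, hl]⟩
  | neg x _ hx =>
    obtain ⟨k, hk⟩ := hx
    exact ⟨-k, by simp [hk]⟩

section Chambers

variable {C : Set V} {β : Module.Dual ℝ V}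

lemma mem_pos_or_neg_mem_pos (hC : RS.IsChamber C) (hβ : β ∈ RS.roots) :
    β ∈ RS.pos C ∨ -β ∈ RS.pos C := by
  obtain ⟨v, hreg, rfl⟩ := hC
  rcases (hreg β hβ).lt_or_gt with h | h
  · exact Or.inr ⟨RS.neg_mem_roots hβ, fun x hx => hx _ (RS.neg_mem_roots hβ) (by simpa using h)⟩
  · exact Or.inl ⟨hβ, fun x hx => hx β hβ h⟩

lemma apply_neg_of_mem_chamber (hC : RS.IsChamber C) (hβ : β ∈ RS.roots) {x y : V}
    (hx : x ∈ C) (hy : y ∈ C) (h : β x < 0) : β y < 0 := by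
  rcases RS.mem_pos_or_neg_mem_pos hC hβ with hpos | hneg
  · exact absurd (hpos.2 x hx) h.not_gt
  · simpa using hneg.2 y hy

lemma alcove_nonempty (hC : RS.IsChamber C) : (RS.alcove C).Nonempty := by
  obtain ⟨v, -, rfl⟩ := hC
  obtain ⟨b, hb⟩ := (RS.finite.image fun α => α v).bddAbove
  have hpos : 0 < max b 1 + 1 := by linarith [le_max_right b 1]
  refine ⟨(max b 1 + 1)⁻¹ • v, fun α ⟨hα, hαC⟩ => ?_⟩
  have hv : 0 < α v := hαC v fun γ _ h => h
  have hle : α v ≤ b := hb ⟨α, hα, rfl⟩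
  rw [map_smul, smul_eq_mul]
  refine ⟨by positivity, ?_⟩
  rw [inv_mul_lt_iff₀ hpos, mul_one]
  linarith [le_max_left b 1]

lemma abs_apply_mem_Ioo_of_mem_alcove (hC : RS.IsChamber C) (hβ : β ∈ RS.roots) {a : V}
    (ha : a ∈ RS.alcove C) : |β a| ∈ Set.Ioo 0 1 := by
  rcases RS.mem_pos_or_neg_mem_pos hC hβ with hpos | hneg
  · obtain ⟨h0, h1⟩ := ha β hpos
    rw [abs_of_pos h0]
    exact ⟨h0, h1⟩
  · obtain ⟨h0, h1⟩ := ha (-β) hneg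
    rw [LinearMap.neg_apply] at h0 h1
    rw [abs_of_neg (neg_pos.mp h0)]
    exact ⟨h0, h1⟩

lemma nonneg_of_aev_pos (hC : RS.IsChamber C) (hβ : β ∈ RS.roots) {a : V}
    (ha : a ∈ RS.alcove C) {n : ℤ} (h : 0 < aev β n a) : 0 ≤ n := by
  have hβa := (RS.abs_apply_mem_Ioo_of_mem_alcove hC hβ ha).2
  have hn : ((-1 : ℤ) : ℝ) < n := by
    unfold aev at h
    push_cast
    linarith [le_abs_self (β a)]
  have := Int.cast_lt.mp hn
  omega

lemma nonpos_of_aev_neg (hC : RS.IsChamber C) (hβ : β ∈ RS.roots) {a : V}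
    (ha : a ∈ RS.alcove C) {n : ℤ} (h : aev β n a < 0) : n ≤ 0 := by
  have hβa := (RS.abs_apply_mem_Ioo_of_mem_alcove hC hβ ha).2
  have hn : (n : ℝ) < ((1 : ℤ) : ℝ) := by
    unfold aev at h
    push_cast
    linarith [neg_abs_le (β a)]
  have := Int.cast_lt.mp hn
  omega

end Chambers

def IsAffRoot (f : V → ℝ) : Prop := ∃ β ∈ RS.roots, ∃ n : ℤ, f = aev β n

def sepAffRoots (x y : V) : Set (V → ℝ) := {f | RS.IsAffRoot f ∧ 0 < f x ∧ f y < 0}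

def PreservesAffRoots (w : Equiv.Perm V) : Prop :=
  ∀ f, RS.IsAffRoot f → RS.IsAffRoot (f ∘ w)

section Alcove

variable {C₀ : Set V} {a : V}

lemma apply_ne_zero_of_isAffRoot (hC₀ : RS.IsChamber C₀) (ha : a ∈ RS.alcove C₀)
    {f : V → ℝ} (hf : RS.IsAffRoot f) : f a ≠ 0 := by
  obtain ⟨β, hβ, n, rfl⟩ := hf
  intro h
  have hn : β a = -n := by
    unfold aev at h
    linarith
  obtain ⟨h0, h1⟩ := RS.abs_apply_mem_Ioo_of_mem_alcove hC₀ hβ ha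
  rw [hn, abs_neg, ← Int.cast_abs] at h0 h1
  have : (0 : ℤ) < |n| := by exact_mod_cast h0
  have : |n| < 1 := by exact_mod_cast h1
  omega

lemma isPosAff_iff (hC₀ : RS.IsChamber C₀) (ha : a ∈ RS.alcove C₀) {f : V → ℝ} :
    RS.IsPosAff (RS.pos C₀) f ↔ RS.IsAffRoot f ∧ 0 < f a := by
  constructor
  · rintro ⟨β, hβ, n, rfl, hn⟩
    refine ⟨⟨β, hβ, n, rfl⟩, ?_⟩
    rcases hn with hn | ⟨rfl, hpos⟩
    · have h1 : (1 : ℝ) ≤ n := by exact_mod_cast hn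
      have hβa := (RS.abs_apply_mem_Ioo_of_mem_alcove hC₀ hβ ha).2
      show 0 < β a + n
      linarith [neg_abs_le (β a)]
    · simpa [aev] using (ha β hpos).1
  · rintro ⟨⟨β, hβ, n, rfl⟩, h⟩
    refine ⟨β, hβ, n, rfl, ?_⟩
    rcases (RS.nonneg_of_aev_pos hC₀ hβ ha h).lt_or_eq with hn | rfl
    · exact Or.inl hn
    · refine Or.inr ⟨rfl, ?_⟩
      rcases RS.mem_pos_or_neg_mem_pos hC₀ hβ with hpos | hneg
      · exact hpos
      · have := (ha _ hneg).1
        simp only [aev, Int.cast_zero, add_zero, LinearMap.neg_apply] at h this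
        linarith

lemma invSet_eq_sepAffRoots (hC₀ : RS.IsChamber C₀) (ha : a ∈ RS.alcove C₀)
    {w : Equiv.Perm V} (hw : RS.PreservesAffRoots w) :
    RS.invSet (RS.pos C₀) w = RS.sepAffRoots a (w a) := by
  ext f
  simp only [invSet, sepAffRoots, Set.mem_ofPred_eq, RS.isPosAff_iff hC₀ ha]
  constructor
  · rintro ⟨⟨hf, hfa⟩, hfw⟩
    have hne : f (w a) ≠ 0 := RS.apply_ne_zero_of_isAffRoot hC₀ ha (hw f hf)
    exact ⟨hf, hfa, hne.lt_of_le (not_lt.mp fun h => hfw ⟨hw f hf, h⟩)⟩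
  · rintro ⟨hf, hfa, hfw⟩
    exact ⟨⟨hf, hfa⟩, fun h => hfw.not_gt h.2⟩

end Alcove

lemma PreservesAffRoots.mul {RS : RootSystemData V} {w₁ w₂ : Equiv.Perm V}
    (h₁ : RS.PreservesAffRoots w₁) (h₂ : RS.PreservesAffRoots w₂) :
    RS.PreservesAffRoots (w₁ * w₂) :=
  fun f hf => h₂ _ (h₁ f hf)

lemma preservesAffRoots_sAff {α : Module.Dual ℝ V} (hα : α ∈ RS.roots) (n : ℤ) :
    RS.PreservesAffRoots (RS.sAff α n) := by
  rintro _ ⟨β, hβ, m, rfl⟩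
  obtain ⟨c, hc⟩ := RS.crystallographic α hα β hβ
  refine ⟨β - β (RS.coroot α) • α, RS.reflect_mem α hα β hβ, m - c * n, ?_⟩
  funext x
  simp only [Function.comp_apply, aev, RS.sAff_apply hα, map_sub, map_smul, smul_eq_mul,
    LinearMap.sub_apply, LinearMap.smul_apply, hc]
  push_cast
  ring

lemma preservesAffRoots_of_mem_affWeyl {w : Equiv.Perm V} (hw : w ∈ RS.affWeyl) :
    RS.PreservesAffRoots w := by
  refine Subgroup.closure_induction'' ?_ ?_ (fun f hf => hf) (fun _ _ _ _ h₁ h₂ => h₁.mul h₂) hw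
  · rintro _ ⟨α, ⟨hα, -⟩, n, rfl⟩
    exact RS.preservesAffRoots_sAff hα n
  · rintro _ ⟨α, ⟨hα, -⟩, n, rfl⟩
    rw [sAff_inv]
    exact RS.preservesAffRoots_sAff hα n

lemma preservesAffRoots_transl {μ : V} (hμ : μ ∈ RS.corootLattice) :
    RS.PreservesAffRoots (transl μ) := by
  rintro _ ⟨β, hβ, m, rfl⟩
  obtain ⟨k, hk⟩ := RS.exists_int_eq_apply_of_mem_corootLattice hμ hβ
  exact ⟨β, hβ, m + k, funext (aev_add_apply hk m)⟩

lemma sepAffRoots_finite (x y : V) : (RS.sepAffRoots x y).Finite := by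
  refine (RS.finite.biUnion fun β _ => (Set.finite_Icc ⌈-β x⌉ ⌊-β y⌋).image (aev β)).subset ?_
  rintro _ ⟨⟨β, hβ, n, rfl⟩, hx, hy⟩
  refine Set.mem_biUnion hβ ⟨n, ⟨?_, ?_⟩, rfl⟩
  · rw [Int.ceil_le]
    unfold aev at hx
    linarith
  · rw [Int.le_floor]
    unfold aev at hy
    linarith

lemma ncard_sepAffRoots_add_left {μ : V} (hμ : μ ∈ RS.corootLattice) (x y : V) :
    (RS.sepAffRoots (μ + x) (μ + y)).ncard = (RS.sepAffRoots x y).ncard := by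
  have himage : (· ∘ transl μ) '' RS.sepAffRoots (μ + x) (μ + y) = RS.sepAffRoots x y := by
    ext g
    constructor
    · rintro ⟨f, ⟨hf, hfx, hfy⟩, rfl⟩
      exact ⟨RS.preservesAffRoots_transl hμ f hf, hfx, hfy⟩
    · rintro ⟨hg, hgx, hgy⟩
      refine ⟨g ∘ transl (-μ), ⟨RS.preservesAffRoots_transl (neg_mem hμ) g hg, ?_, ?_⟩, ?_⟩
      · simpa [transl] using hgx
      · simpa [transl] using hgy
      · funext v
        simp [transl]
  rw [← himage, Set.ncard_image_of_injective _ (transl μ).surjective.injective_comp_right]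

lemma ncard_sepAffRoots_eq_add {x y z : V} (hxy : RS.sepAffRoots x y ⊆ RS.sepAffRoots x z)
    (hyz : RS.sepAffRoots y z ⊆ RS.sepAffRoots x z) (hy : ∀ f, RS.IsAffRoot f → f y ≠ 0) :
    (RS.sepAffRoots x z).ncard = (RS.sepAffRoots x y).ncard + (RS.sepAffRoots y z).ncard := by
  have hunion : RS.sepAffRoots x z = RS.sepAffRoots x y ∪ RS.sepAffRoots y z := by
    refine Set.Subset.antisymm ?_ (Set.union_subset hxy hyz)
    rintro f ⟨hf, hfx, hfz⟩
    rcases (hy f hf).lt_or_gt with h | h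
    · exact Or.inl ⟨hf, hfx, h⟩
    · exact Or.inr ⟨hf, h, hfz⟩
  have hdisj : Disjoint (RS.sepAffRoots x y) (RS.sepAffRoots y z) :=
    Set.disjoint_left.mpr fun _ h₁ h₂ => h₁.2.2.not_gt h₂.2.1
  rw [hunion, Set.ncard_union_eq hdisj (RS.sepAffRoots_finite x y) (RS.sepAffRoots_finite y z)]

section Gallery

variable {C₀ C : Set V} {a b μ : V}

lemma sepAffRoots_subset_of_mem_chamber (hC₀ : RS.IsChamber C₀) (ha : a ∈ RS.alcove C₀)
    (hC : RS.IsChamber C) (hμ : μ ∈ RS.corootLattice) (hμa : μ + a ∈ C) (hb : b ∈ C) :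
    RS.sepAffRoots a (μ + a) ⊆ RS.sepAffRoots a (μ + b) := by
  rintro _ ⟨⟨β, hβ, m, rfl⟩, hfa, hfμa⟩
  obtain ⟨k, hk⟩ := RS.exists_int_eq_apply_of_mem_corootLattice hμ hβ
  rw [aev_add_apply hk] at hfμa
  have hm : (0 : ℝ) ≤ m := by exact_mod_cast RS.nonneg_of_aev_pos hC₀ hβ ha hfa
  have hmk : ((m + k : ℤ) : ℝ) ≤ 0 := by exact_mod_cast RS.nonpos_of_aev_neg hC₀ hβ ha hfμa
  have hβμa : β (μ + a) < 0 := by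
    simp only [aev, Int.cast_add] at hfμa
    rw [map_add, hk]
    linarith
  have hβb := RS.apply_neg_of_mem_chamber hC hβ hμa hb hβμa
  refine ⟨⟨β, hβ, m, rfl⟩, hfa, ?_⟩
  rw [aev_add_apply hk]
  unfold aev
  linarith

lemma sepAffRoots_add_left_subset_of_mem_chamber (hC₀ : RS.IsChamber C₀)
    (ha : a ∈ RS.alcove C₀) (hC : RS.IsChamber C) (hμ : μ ∈ RS.corootLattice)
    (hμa : μ + a ∈ C) (hb : b ∈ C) :
    RS.sepAffRoots (μ + a) (μ + b) ⊆ RS.sepAffRoots a (μ + b) := by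
  rintro _ ⟨⟨β, hβ, m, rfl⟩, hfμa, hfμb⟩
  obtain ⟨k, hk⟩ := RS.exists_int_eq_apply_of_mem_corootLattice hμ hβ
  refine ⟨⟨β, hβ, m, rfl⟩, ?_, hfμb⟩
  rw [aev_add_apply hk] at hfμa hfμb
  have hmk : (0 : ℝ) ≤ ((m + k : ℤ) : ℝ) := by
    exact_mod_cast RS.nonneg_of_aev_pos hC₀ hβ ha hfμa
  have hβb : β b < 0 := by
    unfold aev at hfμb
    linarith
  have hβμa := RS.apply_neg_of_mem_chamber hC hβ hb hμa hβb
  have hk0 : (k : ℝ) ≤ 0 := by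
    refine Int.cast_nonpos.mpr (RS.nonpos_of_aev_neg hC₀ hβ ha ?_)
    rwa [← zero_add k, ← aev_add_apply hk, aev, Int.cast_zero, add_zero]
  simp only [aev, Int.cast_add] at hfμa ⊢
  linarith

end Gallery

end RootSystemData

theorem stmt2_general {V : Type*} [AddCommGroup V] [Module ℝ V]
    (RS : RootSystemData V) (C₀ : Set V) (hC₀ : RS.IsChamber C₀)
    (C : Set V) (hC : RS.IsChamber C)
    (μ : V) (hμ : μ ∈ RS.corootLattice) (hμC : RS.MemC C₀ (transl μ) C)
    (w : Equiv.Perm V) (hwW : w ∈ RS.affWeyl) (hwC : RS.MemC C₀ w C) :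
    RS.len C₀ (transl μ * w) = RS.len C₀ (transl μ) + RS.len C₀ w := by
  obtain ⟨a, ha⟩ := RS.alcove_nonempty hC₀
  have hw := RS.preservesAffRoots_of_mem_affWeyl hwW
  have hτ := RS.preservesAffRoots_transl hμ
  have hμa : μ + a ∈ C := hμC a ha
  have hμa_ne : ∀ f, RS.IsAffRoot f → f (μ + a) ≠ 0 := fun f hf =>
    RS.apply_ne_zero_of_isAffRoot hC₀ ha (hτ f hf)
  simp only [RootSystemData.len, RS.invSet_eq_sepAffRoots hC₀ ha hw,
    RS.invSet_eq_sepAffRoots hC₀ ha hτ, RS.invSet_eq_sepAffRoots hC₀ ha (hτ.mul hw)]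
  calc (RS.sepAffRoots a (μ + w a)).ncard
      = (RS.sepAffRoots a (μ + a)).ncard + (RS.sepAffRoots (μ + a) (μ + w a)).ncard :=
        RS.ncard_sepAffRoots_eq_add
          (RS.sepAffRoots_subset_of_mem_chamber hC₀ ha hC hμ hμa (hwC a ha))
          (RS.sepAffRoots_add_left_subset_of_mem_chamber hC₀ ha hC hμ hμa (hwC a ha)) hμa_ne
    _ = (RS.sepAffRoots a (μ + a)).ncard + (RS.sepAffRoots a (w a)).ncard := by
        rw [RS.ncard_sepAffRoots_add_left hμ]

/-- Lemma 1.5(c): for a Weyl chamber `C`, a translation `μ ∈ Λ` with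
`μ(A₀) ⊂ C` and `w ∈ W̃` with `w(A₀) ⊂ C`, one has `l(μw) = l(μ) + l(w)`. -/
theorem stmt2 {V : Type*} [AddCommGroup V] [Module ℝ V] [FiniteDimensional ℝ V]
    (RS : RootSystemData V) (C₀ : Set V) (hC₀ : RS.IsChamber C₀)
    (C : Set V) (hC : RS.IsChamber C)
    (μ : V) (hμ : μ ∈ RS.corootLattice) (hμC : RS.MemC C₀ (transl μ) C)
    (w : Equiv.Perm V) (hwW : w ∈ RS.affWeyl) (hwC : RS.MemC C₀ w C) :
    RS.len C₀ (transl μ * w) = RS.len C₀ (transl μ) + RS.len C₀ w :=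
  stmt2_general RS C₀ hC₀ C hC μ hμ hμC w hwW hwC
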